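/- For every real number c > 1, the Lie algebras 𝔤_c and 𝔤_I are not isomorphic as real Lie algebras. -/
import Mathlib


noncomputable section

/-- The underlying space of the 3-dimensional Lie algebras under consideration. -/
abbrev V3 : Type := Fin 3 → ℝ

/-- The bracket of the Lie algebra `𝔤_c`:
`[e₀,e₁] = 0`, `[e₂,e₀] = e₁`, `[e₂,e₁] = −c e₀ + 2 e₁`, extended bilinearly. -/
def braC (c : ℝ) (x y : V3) : V3 :=
  ![-c * (x 2 * y 1 - y 2 * x 1),
    (x 2 * y 0 - y 2 * x 0) + 2 * (x 2 * y 1 - y 2 * x 1),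
    0]

/-- The bracket of the Lie algebra `𝔤_I`:
`[e₀,e₁] = 0`, `[e₂,e₀] = e₀`, `[e₂,e₁] = e₁`, extended bilinearly. -/
def braI (x y : V3) : V3 :=
  ![x 2 * y 0 - y 2 * x 0, x 2 * y 1 - y 2 * x 1, 0]

/-- `braI x y` always lies in the span of `x` and `y`. -/
lemma braI_eq (x y : V3) : braI x y = (x 2) • y - (y 2) • x := by
  funext i; fin_cases i <;> simp [braI] <;> ring

/-- for every real `c > 1`, the Lie algebras `𝔤_c` and `𝔤_I` are not
isomorphic, i.e. there is no linear equivalence intertwining the two brackets. -/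
theorem stmt1 (c : ℝ) (hc : 1 < c) :
    ¬ ∃ φ : V3 ≃ₗ[ℝ] V3, ∀ x y : V3, φ (braC c x y) = braI (φ x) (φ y) := by
  rintro ⟨φ, h⟩
  set x : V3 := ![0, 0, 1] with hx
  set w : V3 := ![0, 1, 0] with hw
  have hbw : braC c x w = ![-c, 2, 0] := by
    funext i; fin_cases i <;> simp [braC, hx, hw] <;> ring
  have key : φ (![-c, 2, 0] : V3) = φ ((φ x 2) • w - (φ w 2) • x) := by
    rw [← hbw, h, braI_eq, map_sub, map_smul, map_smul]
  have h0 := congrFun (φ.injective key) 0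
  simp [hx, hw] at h0
  linarith
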